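/- arXiv:1403.4176 — 3 statements merged into one kernel-verified Lean document; each statement's English description precedes it below -/
import Mathlib

section
/- Let u be harmonic on B(0,1) with u(0) = 0 and frequency N(0,1) at scale 1. If the distance from N(0,r) to the nearest integer equals ε > 0, then r·(dN/dt)|_{t=r} ≥ 2ε(1−ε). Consequently, if N(0,r) ≤ d − ε for an integer d, then N(0, (ε/(1−ε)) r) ≤ d − 1 + ε. -/
noncomputable section

/-- Almgren frequency of a harmonic function `u = Σ a_k P_k` (spherical-harmonic expansion
with normalized `P_k`), expressed through its coefficients:
`N(0,t) = (Σ k a_k² t^{2k}) / (Σ a_k² t^{2k})`. -/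
noncomputable def freqS (a : ℕ → ℝ) (t : ℝ) : ℝ :=
  (∑' k : ℕ, (k : ℝ) * a k ^ 2 * t ^ (2 * k)) / (∑' k : ℕ, a k ^ 2 * t ^ (2 * k))

/-- `k y^k ≤ (1-y)⁻¹` for `0 ≤ y < 1`. -/
lemma aux_kpow {y : ℝ} (h0 : 0 ≤ y) (h1 : y < 1) (k : ℕ) : (k : ℝ) * y ^ k ≤ (1 - y)⁻¹ := by
  have h2 : (k : ℝ) * y ^ k = ∑ _j ∈ Finset.range k, y ^ k := by
    simp [Finset.sum_const, mul_comm]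
  rw [h2]
  calc ∑ _j ∈ Finset.range k, y ^ k ≤ ∑ j ∈ Finset.range k, y ^ j := by
        apply Finset.sum_le_sum
        intro j hj
        exact pow_le_pow_of_le_one h0 h1.le (Finset.mem_range.mp hj).le
    _ ≤ ∑' j : ℕ, y ^ j :=
        Summable.sum_le_tsum _ (fun j _ => pow_nonneg h0 j) (summable_geometric_of_lt_one h0 h1)
    _ = (1 - y)⁻¹ := tsum_geometric_of_lt_one h0 h1

/-- Core arithmetic inequality: for `c = ε/(1-ε)`, `c^(2m+1) (m+1-ε) ≤ m+ε`. -/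
lemma aux_core {ε : ℝ} (hε : 0 < ε) (hε2 : ε ≤ 1 / 2) (m : ℕ) :
    (ε / (1 - ε)) ^ (2 * m + 1) * ((m : ℝ) + 1 - ε) ≤ (m : ℝ) + ε := by
  have h1ε : (0:ℝ) < 1 - ε := by linarith
  have hc0 : (0:ℝ) ≤ ε / (1 - ε) := by positivity
  have hc1 : ε / (1 - ε) ≤ 1 := by rw [div_le_one h1ε]; linarith
  have hm0 : (0:ℝ) ≤ (m : ℝ) := Nat.cast_nonneg m
  have h3 : (ε / (1 - ε)) ^ (2 * m + 1) ≤ ε / (1 - ε) := by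
    calc (ε / (1 - ε)) ^ (2 * m + 1) ≤ (ε / (1 - ε)) ^ 1 :=
          pow_le_pow_of_le_one hc0 hc1 (by omega)
      _ = ε / (1 - ε) := pow_one _
  have h4 : (ε / (1 - ε)) ^ (2 * m + 1) * ((m : ℝ) + 1 - ε) ≤ ε / (1 - ε) * ((m : ℝ) + 1 - ε) :=
    mul_le_mul_of_nonneg_right h3 (by linarith)
  have h5 : ε / (1 - ε) * ((m : ℝ) + 1 - ε) ≤ (m : ℝ) + ε := by
    rw [div_mul_eq_mul_div, div_le_iff₀ h1ε]
    nlinarith [mul_nonneg hm0 (by linarith : (0:ℝ) ≤ 1 - 2 * ε)]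
  linarith

/-- Summability of the denominator series. -/
lemma aux_sumS (a : ℕ → ℝ) (ha0 : a 0 = 0) (t : ℝ) (ht : 0 ≤ t)
    (hT : Summable (fun k : ℕ => (k : ℝ) * a k ^ 2 * t ^ (2 * k))) :
    Summable (fun k : ℕ => a k ^ 2 * t ^ (2 * k)) := by
  apply Summable.of_nonneg_of_le (fun k => by positivity) _ hT
  intro k
  cases k with
  | zero => simp [ha0]
  | succ j =>
    have h1 : (1 : ℝ) ≤ (j + 1 : ℕ) := by exact_mod_cast Nat.one_le_iff_ne_zero.mpr (by omega)
    have := mul_nonneg (sq_nonneg (a (j+1))) (pow_nonneg ht (2 * (j+1)))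
    nlinarith

/-- Summability of the `k²` series for `t < 1`. -/
lemma aux_sumU (a : ℕ → ℝ)
    (hsum : ∀ t : ℝ, 0 < t → t ≤ 1 → Summable (fun k : ℕ => (k : ℝ) * a k ^ 2 * t ^ (2 * k)))
    (t : ℝ) (ht : 0 ≤ t) (ht1 : t < 1) :
    Summable (fun k : ℕ => (k : ℝ) ^ 2 * a k ^ 2 * t ^ (2 * k)) := by
  set t' : ℝ := (1 + t) / 2 with ht'def
  have ht'0 : 0 < t' := by rw [ht'def]; linarith
  have ht'1 : t' ≤ 1 := by rw [ht'def]; linarith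
  have htt' : t < t' := by rw [ht'def]; linarith
  set q : ℝ := t / t' with hqdef
  have hq0 : 0 ≤ q := by positivity
  have hq1 : q < 1 := by rw [hqdef, div_lt_one ht'0]; exact htt'
  have hq2 : q ^ 2 < 1 := by nlinarith
  have hq20 : 0 ≤ q ^ 2 := by positivity
  have htq : t = q * t' := by rw [hqdef, div_mul_cancel₀]; exact ne_of_gt ht'0
  have hT' := hsum t' ht'0 ht'1
  apply Summable.of_nonneg_of_le (fun k => by positivity) _ (hT'.mul_left (1 - q ^ 2)⁻¹)
  intro k
  calc (k : ℝ) ^ 2 * a k ^ 2 * t ^ (2 * k)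
      = ((k : ℝ) * (q ^ 2) ^ k) * ((k : ℝ) * a k ^ 2 * t' ^ (2 * k)) := by
        rw [htq, mul_pow]; ring
    _ ≤ (1 - q ^ 2)⁻¹ * ((k : ℝ) * a k ^ 2 * t' ^ (2 * k)) := by
        apply mul_le_mul_of_nonneg_right (aux_kpow hq20 hq2 k)
        have := pow_nonneg ht'0.le (2 * k)
        positivity

/-- Positivity of the denominator series. -/
lemma aux_Spos (a : ℕ → ℝ) (t : ℝ) (ht : 0 < t) (hnc : ∃ k : ℕ, a k ≠ 0)
    (hS : Summable (fun k : ℕ => a k ^ 2 * t ^ (2 * k))) :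
    0 < ∑' k : ℕ, a k ^ 2 * t ^ (2 * k) := by
  obtain ⟨k0, hk0⟩ := hnc
  refine Summable.tsum_pos hS (fun k => by positivity) k0 ?_
  have h1 : 0 < a k0 ^ 2 := by positivity
  have h2 : 0 < t ^ (2 * k0) := pow_pos ht _
  positivity

set_option maxHeartbeats 2000000 in
theorem stmt14 (a : ℕ → ℝ) (ha0 : a 0 = 0) (hnc : ∃ k : ℕ, a k ≠ 0)
    (hsum : ∀ t : ℝ, 0 < t → t ≤ 1 → Summable (fun k : ℕ => (k : ℝ) * a k ^ 2 * t ^ (2 * k)))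
    (r ε : ℝ) (hr : 0 < r) (hr1 : r < 1) (hε : 0 < ε) (hε2 : ε ≤ 1 / 2)
    (hdist : ∀ k : ℤ, ε ≤ |freqS a r - k|)
    (hdist' : ∃ k : ℤ, |freqS a r - k| = ε) :
    2 * ε * (1 - ε) ≤ r * deriv (freqS a) r
    ∧ ∀ d : ℕ, 1 ≤ d → freqS a r ≤ d - ε →
        freqS a (ε / (1 - ε) * r) ≤ d - 1 + ε := by
  have h1ε : (0:ℝ) < 1 - ε := by linarith
  -- basic summability facts at r
  have sumTr := hsum r hr hr1.le
  have sumSr := aux_sumS a ha0 r hr.le sumTr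
  have sumUr := aux_sumU a hsum r hr.le hr1
  have hSpos := aux_Spos a r hr hnc sumSr
  have hSne : (∑' k : ℕ, a k ^ 2 * r ^ (2 * k)) ≠ 0 := ne_of_gt hSpos
  constructor
  · -- Part 1 : derivative bound
    set R : ℝ := (1 + r) / 2 with hRdef
    have hR0 : 0 < R := by rw [hRdef]; linarith
    have hRr : r < R := by rw [hRdef]; linarith
    have hR1 : R < 1 := by rw [hRdef]; linarith
    have sumTR := hsum R hR0 (le_of_lt hR1)
    have sumUR := aux_sumU a hsum R hR0.le hR1
    have hrball : r ∈ Metric.ball (0:ℝ) R := by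
      simp [Real.dist_eq, abs_of_pos hr, hRr]
    -- derivative of the denominator
    have hSd : HasDerivAt (fun z : ℝ => ∑' k : ℕ, a k ^ 2 * z ^ (2 * k))
        (∑' k : ℕ, a k ^ 2 * ((2 * k : ℕ) * r ^ (2 * k - 1))) r := by
      apply hasDerivAt_tsum_of_isPreconnected (sumTR.mul_left (2 / R))
        Metric.isOpen_ball (convex_ball (0:ℝ) R).isPreconnected
        (g := fun (k:ℕ) (z:ℝ) => a k ^ 2 * z ^ (2 * k))
        (g' := fun k y => a k ^ 2 * ((2 * k : ℕ) * y ^ (2 * k - 1)))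
        ?_ ?_ hrball sumSr hrball
      · intro k y _
        exact (hasDerivAt_pow (2 * k) y).const_mul (a k ^ 2)
      · intro k y hy
        have hyR : |y| < R := by simpa [Real.dist_eq] using hy
        simp only [Real.norm_eq_abs, abs_mul, abs_pow, sq_abs, Nat.abs_cast]
        cases k with
        | zero => simp
        | succ j =>
          have hpow : |y| ^ (2 * (j+1) - 1) ≤ R ^ (2 * (j+1) - 1) :=
            pow_le_pow_left₀ (abs_nonneg y) hyR.le _
          have hRsplit : R ^ (2 * (j+1)) = R ^ (2 * (j+1) - 1) * R := by
            rw [← pow_succ]; congr 1 <;> omega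
          have hre : 2 / R * (((j+1 : ℕ) : ℝ) * a (j+1) ^ 2 * R ^ (2 * (j+1)))
              = ((2 * (j+1) : ℕ) : ℝ) * a (j+1) ^ 2 * R ^ (2 * (j+1) - 1) := by
            rw [hRsplit]; push_cast; field_simp
          have h := mul_le_mul_of_nonneg_left hpow
            (show (0:ℝ) ≤ ((2 * (j+1) : ℕ) : ℝ) * a (j+1) ^ 2 by positivity)
          nlinarith [h, hre]
    -- derivative of the numerator
    have hTd : HasDerivAt (fun z : ℝ => ∑' k : ℕ, (k : ℝ) * a k ^ 2 * z ^ (2 * k))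
        (∑' k : ℕ, (k : ℝ) * a k ^ 2 * ((2 * k : ℕ) * r ^ (2 * k - 1))) r := by
      apply hasDerivAt_tsum_of_isPreconnected (sumUR.mul_left (2 / R))
        Metric.isOpen_ball (convex_ball (0:ℝ) R).isPreconnected
        (g := fun (k:ℕ) (z:ℝ) => (k : ℝ) * a k ^ 2 * z ^ (2 * k))
        (g' := fun k y => (k : ℝ) * a k ^ 2 * ((2 * k : ℕ) * y ^ (2 * k - 1)))
        ?_ ?_ hrball sumTr hrball
      · intro k y _
        exact (hasDerivAt_pow (2 * k) y).const_mul ((k : ℝ) * a k ^ 2)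
      · intro k y hy
        have hyR : |y| < R := by simpa [Real.dist_eq] using hy
        simp only [Real.norm_eq_abs, abs_mul, abs_pow, sq_abs, Nat.abs_cast]
        cases k with
        | zero => simp
        | succ j =>
          have hpow : |y| ^ (2 * (j+1) - 1) ≤ R ^ (2 * (j+1) - 1) :=
            pow_le_pow_left₀ (abs_nonneg y) hyR.le _
          have hRsplit : R ^ (2 * (j+1)) = R ^ (2 * (j+1) - 1) * R := by
            rw [← pow_succ]; congr 1 <;> omega
          have hre : 2 / R * (((j+1 : ℕ) : ℝ) ^ 2 * a (j+1) ^ 2 * R ^ (2 * (j+1)))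
              = ((j+1 : ℕ) : ℝ) * ((2 * (j+1) : ℕ) : ℝ) * a (j+1) ^ 2 * R ^ (2 * (j+1) - 1) := by
            rw [hRsplit]; push_cast; field_simp
          have h := mul_le_mul_of_nonneg_left hpow
            (show (0:ℝ) ≤ ((j+1 : ℕ) : ℝ) * ((2 * (j+1) : ℕ) : ℝ) * a (j+1) ^ 2 by positivity)
          nlinarith [h, hre]
    -- derivative of the quotient
    have hDiv := hTd.div hSd hSne
    have hfun : freqS a = fun y : ℝ =>
        (∑' k : ℕ, (k : ℝ) * a k ^ 2 * y ^ (2 * k)) / (∑' k : ℕ, a k ^ 2 * y ^ (2 * k)) := rfl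
    have hderiv : deriv (freqS a) r =
        ((∑' k : ℕ, (k : ℝ) * a k ^ 2 * ((2 * k : ℕ) * r ^ (2 * k - 1))) *
            (∑' k : ℕ, a k ^ 2 * r ^ (2 * k)) -
          (∑' k : ℕ, (k : ℝ) * a k ^ 2 * r ^ (2 * k)) *
            (∑' k : ℕ, a k ^ 2 * ((2 * k : ℕ) * r ^ (2 * k - 1)))) /
          (∑' k : ℕ, a k ^ 2 * r ^ (2 * k)) ^ 2 := by
      rw [hfun]; exact hDiv.deriv
    -- identify r * (derivative sums)
    have hrS : r * (∑' k : ℕ, a k ^ 2 * ((2 * k : ℕ) * r ^ (2 * k - 1)))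
        = 2 * ∑' k : ℕ, (k : ℝ) * a k ^ 2 * r ^ (2 * k) := by
      rw [← tsum_mul_left, ← tsum_mul_left]
      apply tsum_congr
      intro k
      cases k with
      | zero => simp
      | succ j =>
        have h1 : 2 * (j + 1) - 1 = 2 * j + 1 := by omega
        have h2 : 2 * (j + 1) = (2 * j + 1) + 1 := by omega
        rw [h1, h2, pow_succ]
        push_cast
        ring
    have hrT : r * (∑' k : ℕ, (k : ℝ) * a k ^ 2 * ((2 * k : ℕ) * r ^ (2 * k - 1)))
        = 2 * ∑' k : ℕ, (k : ℝ) ^ 2 * a k ^ 2 * r ^ (2 * k) := by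
      rw [← tsum_mul_left, ← tsum_mul_left]
      apply tsum_congr
      intro k
      cases k with
      | zero => simp
      | succ j =>
        have h1 : 2 * (j + 1) - 1 = 2 * j + 1 := by omega
        have h2 : 2 * (j + 1) = (2 * j + 1) + 1 := by omega
        rw [h1, h2, pow_succ]
        push_cast
        ring
    set S : ℝ := ∑' k : ℕ, a k ^ 2 * r ^ (2 * k) with hSdef
    set T : ℝ := ∑' k : ℕ, (k : ℝ) * a k ^ 2 * r ^ (2 * k) with hTdef
    set U : ℝ := ∑' k : ℕ, (k : ℝ) ^ 2 * a k ^ 2 * r ^ (2 * k) with hUdef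
    -- the frequency and its floor
    have hN : freqS a r = T / S := rfl
    have hTnonneg : 0 ≤ T := by
      rw [hTdef]
      exact tsum_nonneg (fun k => by positivity)
    have hNnonneg : 0 ≤ freqS a r := by rw [hN]; positivity
    set m : ℕ := ⌊freqS a r⌋₊ with hmdef
    have hfl : (m : ℝ) ≤ freqS a r := Nat.floor_le hNnonneg
    have hfl2 : freqS a r < (m : ℝ) + 1 := Nat.lt_floor_add_one _
    have hlow : ε ≤ freqS a r - (m : ℝ) := by
      have := hdist (m : ℤ)
      rwa [Int.cast_natCast, abs_of_nonneg (by linarith)] at this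
    have hhigh : ε ≤ (m : ℝ) + 1 - freqS a r := by
      have := hdist ((m : ℤ) + 1)
      rw [abs_sub_comm] at this
      push_cast at this
      rwa [abs_of_nonneg (by linarith)] at this
    -- the key variance inequality
    have hkey : (2 * (m : ℝ) + 1) * T - (m : ℝ) * ((m : ℝ) + 1) * S ≤ U := by
      have hexp : (fun n : ℕ => ((n : ℝ) - m) * ((n : ℝ) - ((m : ℝ) + 1)) * (a n ^ 2 * r ^ (2 * n)))
          = fun n : ℕ => (n : ℝ) ^ 2 * a n ^ 2 * r ^ (2 * n) -
            ((2 * (m : ℝ) + 1) * ((n : ℝ) * a n ^ 2 * r ^ (2 * n)) -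
              ((m : ℝ) * ((m : ℝ) + 1)) * (a n ^ 2 * r ^ (2 * n))) := by
        funext n; ring
      have hsub : Summable (fun n : ℕ => (2 * (m : ℝ) + 1) * ((n : ℝ) * a n ^ 2 * r ^ (2 * n)) -
          ((m : ℝ) * ((m : ℝ) + 1)) * (a n ^ 2 * r ^ (2 * n))) :=
        (sumTr.mul_left _).sub (sumSr.mul_left _)
      have hnonneg : 0 ≤ ∑' n : ℕ,
          ((n : ℝ) - m) * ((n : ℝ) - ((m : ℝ) + 1)) * (a n ^ 2 * r ^ (2 * n)) := by
        apply tsum_nonneg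
        intro n
        have hB : (0:ℝ) ≤ a n ^ 2 * r ^ (2 * n) := by positivity
        apply mul_nonneg _ hB
        rcases le_or_gt n m with h | h
        · have h1 : (n : ℝ) ≤ (m : ℝ) := by exact_mod_cast h
          nlinarith [mul_nonneg (sub_nonneg.mpr h1) (by linarith : (0:ℝ) ≤ (m:ℝ) + 1 - n)]
        · have h1 : (m : ℝ) + 1 ≤ (n : ℝ) := by exact_mod_cast h
          nlinarith [mul_nonneg (by linarith : (0:ℝ) ≤ (n:ℝ) - m) (sub_nonneg.mpr h1)]
      rw [hexp] at hnonneg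
      rw [Summable.tsum_sub sumUr hsub, Summable.tsum_sub (sumTr.mul_left _) (sumSr.mul_left _),
        tsum_mul_left, tsum_mul_left] at hnonneg
      rw [hTdef, hSdef, hUdef]
      linarith
    -- conclude
    set A : ℝ := ∑' k : ℕ, (k : ℝ) * a k ^ 2 * ((2 * k : ℕ) * r ^ (2 * k - 1)) with hAdef
    set B : ℝ := ∑' k : ℕ, a k ^ 2 * ((2 * k : ℕ) * r ^ (2 * k - 1)) with hBdef
    have hrd : r * deriv (freqS a) r = (2 * U * S - T * (2 * T)) / S ^ 2 := by
      rw [hderiv, show r * ((A * S - T * B) / S ^ 2) = ((r * A) * S - T * (r * B)) / S ^ 2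
        from by ring, hrT, hrS]
    rw [hrd, le_div_iff₀ (by positivity : (0:ℝ) < S ^ 2)]
    have hTN : T = freqS a r * S := by rw [hN, div_mul_cancel₀ _ hSne]
    rw [hTN] at hkey ⊢
    have hint1 : (0:ℝ) ≤ (freqS a r - (m:ℝ) - ε) * ((m:ℝ) + 1 - freqS a r - ε) * S ^ 2 := by
      apply mul_nonneg (mul_nonneg (by linarith) (by linarith)) (sq_nonneg S)
    have hkeyS := mul_le_mul_of_nonneg_right hkey hSpos.le
    nlinarith [hkeyS, hint1]
  · -- Part 2 : decay of frequency at the smaller scale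
    intro d hd hfr
    set c : ℝ := ε / (1 - ε) with hcdef
    have hc0 : 0 < c := by rw [hcdef]; positivity
    have hc1 : c ≤ 1 := by rw [hcdef, div_le_one h1ε]; linarith
    set s : ℝ := c * r with hsdef
    have hs0 : 0 < s := by positivity
    have hsr : s ≤ r := by
      rw [hsdef]
      nlinarith
    have hs1 : s < 1 := lt_of_le_of_lt hsr hr1
    have sumTs := hsum s hs0 hs1.le
    have sumSs := aux_sumS a ha0 s hs0.le sumTs
    have hSspos := aux_Spos a s hs0 hnc sumSs
    -- hypothesis in series form
    have hHyp : (0:ℝ) ≤ ∑' n : ℕ, (((d:ℝ) - ε) - n) * (a n ^ 2 * r ^ (2 * n)) := by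
      have hf : (fun n : ℕ => (((d:ℝ) - ε) - n) * (a n ^ 2 * r ^ (2 * n)))
          = fun n : ℕ => ((d:ℝ) - ε) * (a n ^ 2 * r ^ (2 * n)) -
            (n : ℝ) * a n ^ 2 * r ^ (2 * n) := by funext n; ring
      rw [hf, Summable.tsum_sub (sumSr.mul_left _) sumTr, tsum_mul_left]
      have : freqS a r * (∑' k : ℕ, a k ^ 2 * r ^ (2 * k))
          = ∑' k : ℕ, (k : ℝ) * a k ^ 2 * r ^ (2 * k) := by
        rw [freqS, div_mul_cancel₀ _ hSne]
      nlinarith [mul_le_mul_of_nonneg_right hfr hSpos.le]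
    -- termwise comparison
    have hterm : ∀ n : ℕ, c ^ (2 * d - 1) * ((((d:ℝ) - ε) - n) * (a n ^ 2 * r ^ (2 * n)))
        ≤ (((d:ℝ) - 1 + ε) - n) * (a n ^ 2 * s ^ (2 * n)) := by
      intro n
      have hB : (0:ℝ) ≤ a n ^ 2 * r ^ (2 * n) := by positivity
      have hspow : s ^ (2 * n) = c ^ (2 * n) * r ^ (2 * n) := by
        rw [hsdef, mul_pow]
      have key : c ^ (2 * d - 1) * (((d:ℝ) - ε) - n) ≤ (((d:ℝ) - 1 + ε) - n) * c ^ (2 * n) := by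
        rcases le_or_gt d n with h | h
        · obtain ⟨mm, hmm⟩ : ∃ mm, n = d + mm := ⟨n - d, by omega⟩
          subst hmm
          have hcore := aux_core hε hε2 mm
          rw [← hcdef] at hcore
          have hesplit : 2 * (d + mm) = (2 * d - 1) + (2 * mm + 1) := by omega
          rw [hesplit, pow_add]
          have h2 : c ^ (2 * d - 1) * (c ^ (2 * mm + 1) * ((mm : ℝ) + 1 - ε))
              ≤ c ^ (2 * d - 1) * ((mm : ℝ) + ε) :=
            mul_le_mul_of_nonneg_left hcore (pow_nonneg hc0.le _)
          push_cast
          nlinarith [h2]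
        · obtain ⟨mm, hmm⟩ : ∃ mm, d = n + 1 + mm := ⟨d - 1 - n, by omega⟩
          subst hmm
          have hcore := aux_core hε hε2 mm
          rw [← hcdef] at hcore
          have hesplit : 2 * (n + 1 + mm) - 1 = 2 * n + (2 * mm + 1) := by omega
          rw [hesplit, pow_add]
          have h2 : c ^ (2 * n) * (c ^ (2 * mm + 1) * ((mm : ℝ) + 1 - ε))
              ≤ c ^ (2 * n) * ((mm : ℝ) + ε) :=
            mul_le_mul_of_nonneg_left hcore (pow_nonneg hc0.le _)
          push_cast
          nlinarith [h2]
      calc c ^ (2 * d - 1) * ((((d:ℝ) - ε) - n) * (a n ^ 2 * r ^ (2 * n)))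
          = (c ^ (2 * d - 1) * (((d:ℝ) - ε) - n)) * (a n ^ 2 * r ^ (2 * n)) := by ring
        _ ≤ ((((d:ℝ) - 1 + ε) - n) * c ^ (2 * n)) * (a n ^ 2 * r ^ (2 * n)) :=
            mul_le_mul_of_nonneg_right key hB
        _ = (((d:ℝ) - 1 + ε) - n) * (a n ^ 2 * s ^ (2 * n)) := by rw [hspow]; ring
    -- summabilities for the comparison series
    have sumH : Summable (fun n : ℕ => (((d:ℝ) - ε) - n) * (a n ^ 2 * r ^ (2 * n))) := by
      have hf : (fun n : ℕ => (((d:ℝ) - ε) - n) * (a n ^ 2 * r ^ (2 * n)))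
          = fun n : ℕ => ((d:ℝ) - ε) * (a n ^ 2 * r ^ (2 * n)) -
            (n : ℝ) * a n ^ 2 * r ^ (2 * n) := by funext n; ring
      rw [hf]; exact (sumSr.mul_left _).sub sumTr
    have sumG : Summable (fun n : ℕ => (((d:ℝ) - 1 + ε) - n) * (a n ^ 2 * s ^ (2 * n))) := by
      have hf : (fun n : ℕ => (((d:ℝ) - 1 + ε) - n) * (a n ^ 2 * s ^ (2 * n)))
          = fun n : ℕ => ((d:ℝ) - 1 + ε) * (a n ^ 2 * s ^ (2 * n)) -
            (n : ℝ) * a n ^ 2 * s ^ (2 * n) := by funext n; ring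
      rw [hf]; exact (sumSs.mul_left _).sub sumTs
    -- compare the series
    have hGnn : (0:ℝ) ≤ ∑' n : ℕ, (((d:ℝ) - 1 + ε) - n) * (a n ^ 2 * s ^ (2 * n)) := by
      calc (0:ℝ) ≤ c ^ (2 * d - 1) * ∑' n : ℕ, (((d:ℝ) - ε) - n) * (a n ^ 2 * r ^ (2 * n)) :=
            mul_nonneg (pow_nonneg hc0.le _) hHyp
        _ = ∑' n : ℕ, c ^ (2 * d - 1) * ((((d:ℝ) - ε) - n) * (a n ^ 2 * r ^ (2 * n))) :=
            (tsum_mul_left).symm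
        _ ≤ ∑' n : ℕ, (((d:ℝ) - 1 + ε) - n) * (a n ^ 2 * s ^ (2 * n)) :=
            Summable.tsum_le_tsum hterm (sumH.mul_left _) sumG
    -- convert back to the frequency
    have hf : (fun n : ℕ => (((d:ℝ) - 1 + ε) - n) * (a n ^ 2 * s ^ (2 * n)))
        = fun n : ℕ => ((d:ℝ) - 1 + ε) * (a n ^ 2 * s ^ (2 * n)) -
          (n : ℝ) * a n ^ 2 * s ^ (2 * n) := by funext n; ring
    rw [hf, Summable.tsum_sub (sumSs.mul_left _) sumTs, tsum_mul_left] at hGnn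
    rw [freqS, div_le_iff₀ hSspos]
    linarith
end
end

section
/- If the distance from N(0,r) to the set of natural numbers equals 2ε > 0, then N(0,r) − N(0, r/e) ≥ ε. -/
/-! With `w k = a k ^ 2 * r ^ (2 * k)`, `N(r)` is the mean `m` of `k` under the weights `w`, and
`N(r / e)` is the mean under the tilted weights `w k * q ^ k`, `q = e⁻²`. So it suffices that
`∑ w k * q ^ k * (m - ε - k) ≥ 0`. Write `m - ε = n + u` with `n ∈ ℕ`, `u ∈ [0, 1]`. On the
integers, `x ↦ q ^ x * (u - x)` lies above its secant through `x = 0` and `x = 1`; this secant is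
affine, so its `w`-average is its value at the mean, and that value is nonnegative because the
fractional part of `m` lies in `[2ε, 1 - 2ε]` and `q ≤ 1/3`. -/

noncomputable section

def weightedMean (w : ℕ → ℝ) : ℝ :=
  (∑' k : ℕ, (k : ℝ) * w k) / ∑' k : ℕ, w k

lemma summable_of_summable_nat_mul {w : ℕ → ℝ} (hw : ∀ k, 0 ≤ w k)
    (h : Summable fun k : ℕ => (k : ℝ) * w k) : Summable w := by
  refine (summable_nat_add_iff 1).mp ?_
  refine ((summable_nat_add_iff 1).mpr h).of_nonneg_of_le (fun k => hw _) fun k => ?_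
  exact le_mul_of_one_le_left (hw _) (by push_cast; linarith [k.cast_nonneg (α := ℝ)])

section Secant

variable {q u : ℝ}

lemma secant_le_pow_mul_sub (hq0 : 0 ≤ q) (hq1 : q ≤ 1) (hu0 : 0 ≤ u) (hu1 : u ≤ 1) (j : ℕ) :
    u + j * (q * (u - 1) - u) ≤ q ^ j * (u - j) := by
  rcases j with _ | j
  · simp
  · have hpow : q ^ (j + 1) ≤ q := pow_le_of_le_one hq0 hq1 j.succ_ne_zero
    have hj : (0 : ℝ) ≤ j := j.cast_nonneg
    push_cast
    -- `q * (u - (j + 1))` sits between the two sides; its gap to the secant is `u * (1 - q) * j`.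
    nlinarith [mul_le_mul_of_nonpos_right hpow (by linarith : u - (j + 1) ≤ 0),
      mul_nonneg (mul_nonneg hu0 (sub_nonneg.mpr hq1)) hj]

lemma pow_mul_sub_secant_le (hq0 : 0 ≤ q) (hq1 : q ≤ 1) (hu0 : 0 ≤ u) (hu1 : u ≤ 1) (i : ℕ) :
    q ^ i * (u - i * (q * (u - 1) - u)) ≤ u + i := by
  have hslope : -(q * (u - 1) - u) ≤ 1 := by nlinarith
  have hi : (0 : ℝ) ≤ i := i.cast_nonneg
  calc q ^ i * (u - i * (q * (u - 1) - u)) ≤ q ^ i * (u + i) := by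
        gcongr
        nlinarith
    _ ≤ u + i := mul_le_of_le_one_left (by positivity) (pow_le_one₀ hq0 hq1)

/-- `u + x * (q * (u - 1) - u)` is the secant of `x ↦ q ^ x * (u - x)` through `x = 0` and
`x = 1`, here shifted to `x = n` and `x = n + 1`. -/
lemma pow_mul_secant_le (hq0 : 0 ≤ q) (hq1 : q ≤ 1) (hu0 : 0 ≤ u) (hu1 : u ≤ 1) (n k : ℕ) :
    q ^ n * (u + ((k : ℝ) - n) * (q * (u - 1) - u)) ≤ q ^ k * (u + n - k) := by
  rcases le_total n k with hnk | hkn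
  · obtain ⟨j, rfl⟩ := Nat.exists_eq_add_of_le hnk
    have h := mul_le_mul_of_nonneg_left (secant_le_pow_mul_sub hq0 hq1 hu0 hu1 j)
      (pow_nonneg hq0 n)
    rw [pow_add]
    push_cast
    linarith
  · obtain ⟨i, rfl⟩ := Nat.exists_eq_add_of_le hkn
    have h := mul_le_mul_of_nonneg_left (pow_mul_sub_secant_le hq0 hq1 hu0 hu1 i)
      (pow_nonneg hq0 k)
    rw [pow_add]
    push_cast
    nlinarith

/-- The left side is concave in `δ`; at `δ = 2ε` and `δ = 1 - 2ε` it is nonnegative because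
`q ≤ 1/3`. -/
lemma secant_at_frac_nonneg {ε δ : ℝ} (hq : q ≤ 1 / 3) (hε : 0 ≤ ε)
    (hlo : 2 * ε ≤ δ) (hhi : δ ≤ 1 - 2 * ε) :
    0 ≤ (δ - ε) + δ * (q * (δ - ε - 1) - (δ - ε)) := by
  nlinarith [mul_nonneg (mul_nonneg (sub_nonneg.mpr hlo) (sub_nonneg.mpr hhi))
    (by linarith : (0 : ℝ) ≤ 1 - q), mul_nonneg hε (sub_nonneg.mpr hq),
    mul_nonneg (mul_nonneg hε hε) (sub_nonneg.mpr hq)]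

end Secant

lemma weightedMean_geom_le {w : ℕ → ℝ} {q ε : ℝ} {n : ℕ} (hw : ∀ k, 0 ≤ w k)
    (hA : Summable fun k : ℕ => (k : ℝ) * w k) (hB : 0 < ∑' k, w k)
    (hq0 : 0 ≤ q) (hq : q ≤ 1 / 3) (hε : 0 ≤ ε)
    (hlo : n + 2 * ε ≤ weightedMean w) (hhi : weightedMean w ≤ n + 1 - 2 * ε) :
    weightedMean (fun k => w k * q ^ k) ≤ weightedMean w - ε := by
  set m := weightedMean w with hm
  set u := m - ε - n
  set σ := q * (u - 1) - u
  have hq1 : q ≤ 1 := by linarith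
  have hwq k : w k * q ^ k ≤ w k := mul_le_of_le_one_right (hw k) (pow_le_one₀ hq0 hq1)
  have hBs : Summable w := summable_of_summable_nat_mul hw hA
  have hwq0 k : 0 ≤ w k * q ^ k := mul_nonneg (hw k) (pow_nonneg hq0 k)
  have hBq : Summable fun k => w k * q ^ k := hBs.of_nonneg_of_le hwq0 hwq
  have hAq : Summable fun k : ℕ => (k : ℝ) * (w k * q ^ k) :=
    hA.of_nonneg_of_le (fun k => mul_nonneg k.cast_nonneg (hwq0 k)) fun k => by
      gcongr; exact hwq k
  have hAm : ∑' k : ℕ, (k : ℝ) * w k = m * ∑' k, w k := by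
    rw [hm, weightedMean, div_mul_cancel₀ _ hB.ne']
  have hsecant : HasSum (fun k : ℕ => w k * (q ^ n * (u + ((k : ℝ) - n) * σ)))
      (q ^ n * (∑' k, w k) * (u + (m - n) * σ)) := by
    have hsum : q ^ n * (∑' k, w k) * (u + (m - n) * σ) =
        q ^ n * (u - n * σ) * (∑' k, w k) + q ^ n * σ * ∑' k : ℕ, (k : ℝ) * w k := by
      rw [hAm]; ring
    rw [hsum, funext fun k : ℕ => (by ring : w k * (q ^ n * (u + ((k : ℝ) - n) * σ)) =
      q ^ n * (u - n * σ) * w k + q ^ n * σ * ((k : ℝ) * w k))]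
    exact (hBs.hasSum.mul_left _).add (hA.hasSum.mul_left _)
  have htilt : HasSum (fun k : ℕ => w k * (q ^ k * (u + n - k)))
      ((m - ε) * (∑' k, w k * q ^ k) - ∑' k : ℕ, (k : ℝ) * (w k * q ^ k)) := by
    rw [funext fun k : ℕ => (by ring : w k * (q ^ k * (u + n - k)) =
      (m - ε) * (w k * q ^ k) - (k : ℝ) * (w k * q ^ k))]
    exact (hBq.hasSum.mul_left _).sub hAq.hasSum
  have hle := hasSum_le (fun k => mul_le_mul_of_nonneg_left
    (pow_mul_secant_le hq0 hq1 (by linarith) (by linarith) n k) (hw k)) hsecant htilt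
  have hnonneg : 0 ≤ u + (m - n) * σ := by
    have := secant_at_frac_nonneg hq hε (δ := m - n) (by linarith) (by linarith)
    convert this using 2 <;> ring
  have hsecant_nonneg : 0 ≤ q ^ n * (∑' k, w k) * (u + (m - n) * σ) :=
    mul_nonneg (mul_nonneg (pow_nonneg hq0 n) hB.le) hnonneg
  exact div_le_of_le_mul₀ (tsum_nonneg hwq0) (by linarith) (by linarith)

lemma exists_nat_add_le_of_forall_le_abs_sub {m δ : ℝ} (hm : 0 ≤ m)
    (h : ∀ k : ℕ, δ ≤ |m - k|) : ∃ n : ℕ, n + δ ≤ m ∧ m ≤ n + 1 - δ := by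
  refine ⟨⌊m⌋₊, ?_, ?_⟩
  · have := h ⌊m⌋₊
    rw [abs_of_nonneg (sub_nonneg.mpr (Nat.floor_le hm))] at this
    linarith
  · have := h (⌊m⌋₊ + 1)
    rw [abs_of_neg (by push_cast; linarith [Nat.lt_floor_add_one m])] at this
    push_cast at this
    linarith

lemma freqS_eq_weightedMean (a : ℕ → ℝ) (t : ℝ) :
    freqS a t = weightedMean fun k => a k ^ 2 * t ^ (2 * k) := by
  simp only [freqS, weightedMean, mul_assoc]

lemma freqS_div_le_sub (a : ℕ → ℝ) {r c ε : ℝ}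
    (hsum : Summable fun k : ℕ => (k : ℝ) * a k ^ 2 * r ^ (2 * k)) (hc : 3 ≤ c ^ 2)
    (hε : 0 < ε) (hdist : ∀ k : ℕ, 2 * ε ≤ |freqS a r - k|) :
    freqS a (r / c) ≤ freqS a r - ε := by
  have htilt : (fun k => a k ^ 2 * (r / c) ^ (2 * k)) =
      fun k => a k ^ 2 * r ^ (2 * k) * (c ^ 2)⁻¹ ^ k := by
    ext k; simp only [pow_mul, div_eq_mul_inv, mul_pow, inv_pow, mul_assoc]
  rw [freqS_eq_weightedMean, freqS_eq_weightedMean, htilt]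
  rw [freqS_eq_weightedMean] at hdist
  set w : ℕ → ℝ := fun k => a k ^ 2 * r ^ (2 * k)
  have hw k : 0 ≤ w k := by simp only [w, pow_mul]; positivity
  have hA : Summable fun k : ℕ => (k : ℝ) * w k := by simpa only [w, mul_assoc] using hsum
  have hm : 0 ≤ weightedMean w :=
    div_nonneg (tsum_nonneg fun k => mul_nonneg k.cast_nonneg (hw k)) (tsum_nonneg hw)
  have hB : 0 < ∑' k, w k := by
    -- otherwise `N(r) = 0` would be an integer
    refine (tsum_nonneg hw).lt_of_ne' fun hB => ?_
    have := hdist 0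
    simp only [weightedMean, hB, div_zero, CharP.cast_eq_zero, sub_zero, abs_zero] at this
    linarith
  obtain ⟨n, hlo, hhi⟩ := exists_nat_add_le_of_forall_le_abs_sub hm hdist
  exact weightedMean_geom_le hw hA hB (by positivity)
    (inv_le_of_inv_le₀ (by norm_num) (by linarith)) hε.le hlo (by linarith)

theorem stmt15_general (a : ℕ → ℝ)
    (hsum : ∀ t : ℝ, 0 < t → t ≤ 1 → Summable (fun k : ℕ => (k : ℝ) * a k ^ 2 * t ^ (2 * k)))
    (r ε : ℝ) (hr : 0 < r) (hr1 : r < 1) (hε : 0 < ε)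
    (hdist : ∀ k : ℕ, 2 * ε ≤ |freqS a r - k|) :
    ε ≤ freqS a r - freqS a (r / Real.exp 1) := by
  have he : 3 ≤ Real.exp 1 ^ 2 := by nlinarith [Real.add_one_le_exp (1 : ℝ)]
  linarith [freqS_div_le_sub a (hsum r hr hr1.le) he hε hdist]

theorem stmt15 (a : ℕ → ℝ) (ha0 : a 0 = 0) (hnc : ∃ k : ℕ, a k ≠ 0)
    (hsum : ∀ t : ℝ, 0 < t → t ≤ 1 → Summable (fun k : ℕ => (k : ℝ) * a k ^ 2 * t ^ (2 * k)))
    (r ε : ℝ) (hr : 0 < r) (hr1 : r < 1) (hε : 0 < ε)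
    (hdist : ∀ k : ℕ, 2 * ε ≤ |freqS a r - k|)
    (hdist' : ∃ k : ℕ, |freqS a r - k| = 2 * ε) :
    ε ≤ freqS a r - freqS a (r / Real.exp 1) :=
  stmt15_general a hsum r ε hr hr1 hε hdist
end
end

section
/- Let u be harmonic on B(0,r), u(0) = 0, with expansion u = Σ_k a_k P_k and h(t) = Σ_k a_k² t^{2k}. Then for every ε > 0, either there exists an integer d with a_d² r^{2d} ≥ (1 − 6ε) h(r), or N(0,r) − N(0, r/e) ≥ ε. -/
noncomputable section

/-- `h(t) = Σ a_k² t^{2k}`, the spherical average of `u²` on `∂B(0,t)`. -/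
noncomputable def hS (a : ℕ → ℝ) (t : ℝ) : ℝ := ∑' k : ℕ, a k ^ 2 * t ^ (2 * k)

set_option maxHeartbeats 4000000 in
theorem stmt16 (a : ℕ → ℝ) (ha0 : a 0 = 0) (hnc : ∃ k : ℕ, a k ≠ 0)
    (r : ℝ) (hr : 0 < r)
    (hsum : ∀ t : ℝ, 0 < t → t ≤ r → Summable (fun k : ℕ => (k : ℝ) * a k ^ 2 * t ^ (2 * k)))
    (ε : ℝ) (hε : 0 < ε) :
    (∃ d : ℕ, (1 - 6 * ε) * hS a r ≤ a d ^ 2 * r ^ (2 * d))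
    ∨ ε ≤ freqS a r - freqS a (r / Real.exp 1) := by
  classical
  by_cases H : ∃ d : ℕ, (1 - 6 * ε) * hS a r ≤ a d ^ 2 * r ^ (2 * d)
  · exact Or.inl H
  right
  push_neg at H
  have hepos : (0 : ℝ) < Real.exp 1 := Real.exp_pos 1
  have he1 : (1 : ℝ) ≤ Real.exp 1 := by nlinarith [Real.add_one_le_exp (1 : ℝ)]
  set s : ℝ := r / Real.exp 1 with hs_def
  have hs0 : 0 < s := div_pos hr hepos
  have hsr : s ≤ r := by
    rw [hs_def, div_le_iff₀ hepos]; nlinarith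
  set q : ℝ := Real.exp (-2) with hq_def
  have hq0 : 0 < q := Real.exp_pos _
  have hqhalf : q ≤ 1 / 2 := by
    have h3 : (2 : ℝ) ≤ Real.exp 2 := by nlinarith [Real.add_one_le_exp (2 : ℝ)]
    rw [hq_def, Real.exp_neg]
    rw [inv_le_comm₀ (by positivity) (by norm_num)]
    simpa [one_div] using h3
  have hq1 : q ≤ 1 := by linarith
  set b : ℕ → ℝ := fun k => a k ^ 2 * r ^ (2 * k) with hb_def
  set w : ℕ → ℝ := fun k => a k ^ 2 * s ^ (2 * k) with hw_def
  have hbnn : ∀ k, 0 ≤ b k := fun k => mul_nonneg (sq_nonneg _) (pow_nonneg hr.le _)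
  have hwnn : ∀ k, 0 ≤ w k := fun k => mul_nonneg (sq_nonneg _) (pow_nonneg hs0.le _)
  have hwb : ∀ k, w k = b k * q ^ k := by
    intro k
    have h1 : (Real.exp 1) ^ (2 * k) = Real.exp (2 * k) := by
      rw [← Real.exp_nat_mul]; norm_num
    have h2 : q ^ k = Real.exp (-(2 * k)) := by
      rw [hq_def, ← Real.exp_nat_mul]; ring_nf
    show a k ^ 2 * s ^ (2 * k) = (a k ^ 2 * r ^ (2 * k)) * q ^ k
    rw [hs_def, div_pow, h1, h2, Real.exp_neg, div_eq_mul_inv]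
    push_cast
    ring
  -- summability
  have hS1 : Summable (fun k : ℕ => (k : ℝ) * b k) := by
    simpa [hb_def, mul_assoc] using hsum r hr le_rfl
  have hT1 : Summable (fun k : ℕ => (k : ℝ) * w k) := by
    simpa [hw_def, mul_assoc] using hsum s hs0 hsr
  have hb0 : b 0 = 0 := by simp [hb_def, ha0]
  have hw0 : w 0 = 0 := by simp [hw_def, ha0]
  have hS0 : Summable b := by
    refine Summable.of_nonneg_of_le hbnn (fun k => ?_) hS1
    match k with
    | 0 => simp [hb0]
    | (n+1) =>
      have h1 : (1 : ℝ) ≤ ((n+1 : ℕ) : ℝ) := by exact_mod_cast Nat.one_le_iff_ne_zero.mpr (Nat.succ_ne_zero n)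
      exact le_mul_of_one_le_left (hbnn _) h1
  have hT0 : Summable w := by
    refine Summable.of_nonneg_of_le hwnn (fun k => ?_) hT1
    match k with
    | 0 => simp [hw0]
    | (n+1) =>
      have h1 : (1 : ℝ) ≤ ((n+1 : ℕ) : ℝ) := by exact_mod_cast Nat.one_le_iff_ne_zero.mpr (Nat.succ_ne_zero n)
      exact le_mul_of_one_le_left (hwnn _) h1
  set S1 : ℝ := ∑' k : ℕ, (k : ℝ) * b k with hS1_def
  set S0 : ℝ := ∑' k, b k with hS0_def
  set T1 : ℝ := ∑' k : ℕ, (k : ℝ) * w k with hT1_def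
  set T0 : ℝ := ∑' k, w k with hT0_def
  -- positivity of S0, T0
  obtain ⟨k0, hk0⟩ := hnc
  have ha2pos : 0 < a k0 ^ 2 := lt_of_le_of_ne (sq_nonneg _) (Ne.symm (pow_ne_zero 2 hk0))
  have hS0pos : 0 < S0 := Summable.tsum_pos hS0 hbnn k0 (mul_pos ha2pos (pow_pos hr _))
  have hT0pos : 0 < T0 := Summable.tsum_pos hT0 hwnn k0 (mul_pos ha2pos (pow_pos hs0 _))
  -- H in terms of b and S0
  have hbk : ∀ k, b k ≤ (1 - 6 * ε) * S0 := fun k => (H k).le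
  -- double sums
  have hnn1 : ∀ k : ℕ, 0 ≤ (k : ℝ) * b k := fun k => mul_nonneg (Nat.cast_nonneg k) (hbnn k)
  have hnn2 : ∀ k : ℕ, 0 ≤ (k : ℝ) * w k := fun k => mul_nonneg (Nat.cast_nonneg k) (hwnn k)
  have hg1 : Summable (fun z : ℕ × ℕ => ((z.1 : ℝ) * b z.1) * w z.2) :=
    hS1.mul_of_nonneg hT0 hnn1 hwnn
  have hg2 : Summable (fun z : ℕ × ℕ => b z.1 * ((z.2 : ℝ) * w z.2)) :=
    hS0.mul_of_nonneg hT1 hbnn hnn2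
  have hgprod : Summable (fun z : ℕ × ℕ => b z.1 * w z.2) :=
    hS0.mul_of_nonneg hT0 hbnn hwnn
  have hgprod' : Summable (fun z : ℕ × ℕ => b z.2 * w z.1) := by
    have := (Equiv.prodComm ℕ ℕ).summable_iff.mpr hgprod
    exact this
  -- the antisymmetrized sum
  have hgrw : (fun z : ℕ × ℕ => ((z.1 : ℝ) - z.2) * (b z.1 * w z.2))
      = fun z : ℕ × ℕ => ((z.1 : ℝ) * b z.1) * w z.2 - b z.1 * ((z.2 : ℝ) * w z.2) := by
    funext z; ring
  have hgsum : Summable (fun z : ℕ × ℕ => ((z.1 : ℝ) - z.2) * (b z.1 * w z.2)) := by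
    rw [hgrw]; exact hg1.sub hg2
  have hgval : ∑' z : ℕ × ℕ, ((z.1 : ℝ) - z.2) * (b z.1 * w z.2) = S1 * T0 - S0 * T1 := by
    rw [hgrw, Summable.tsum_sub hg1 hg2, ← Summable.tsum_mul_tsum hS1 hT0 hg1, ← Summable.tsum_mul_tsum hS0 hT1 hg2]
  have hgswap : Summable (fun z : ℕ × ℕ => ((z.2 : ℝ) - z.1) * (b z.2 * w z.1)) := by
    have := (Equiv.prodComm ℕ ℕ).summable_iff.mpr hgsum
    exact this
  have hgswapval : ∑' z : ℕ × ℕ, ((z.2 : ℝ) - z.1) * (b z.2 * w z.1) = S1 * T0 - S0 * T1 := by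
    rw [← hgval]
    exact Equiv.tsum_eq (Equiv.prodComm ℕ ℕ) (fun z : ℕ × ℕ => ((z.1 : ℝ) - z.2) * (b z.1 * w z.2))
  set G : ℕ × ℕ → ℝ := fun z => ((z.1 : ℝ) - z.2) * (b z.1 * w z.2 - b z.2 * w z.1) with hG_def
  have hGrw : G = fun z : ℕ × ℕ => ((z.1 : ℝ) - z.2) * (b z.1 * w z.2)
      + ((z.2 : ℝ) - z.1) * (b z.2 * w z.1) := by
    funext z; rw [hG_def]; ring
  have hGsum : Summable G := by rw [hGrw]; exact hgsum.add hgswap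
  have hGval : ∑' z, G z = 2 * (S1 * T0 - S0 * T1) := by
    rw [hGrw, Summable.tsum_add hgsum hgswap, hgval, hgswapval]; ring
  -- pointwise bounds
  set h1 : ℕ × ℕ → ℝ := fun z => if z.2 < z.1 then b z.1 * w z.2 else 0 with hh1_def
  set h2 : ℕ × ℕ → ℝ := fun z => if z.2 < z.1 then b z.2 * w z.1 else 0 with hh2_def
  set h2' : ℕ × ℕ → ℝ := fun z => if z.1 < z.2 then b z.1 * w z.2 else 0 with hh2'_def
  set dg : ℕ × ℕ → ℝ := fun z => if z.1 = z.2 then b z.1 * w z.2 else 0 with hdg_def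
  have hGnn : ∀ z, 0 ≤ G z := by
    rintro ⟨j, k⟩
    show 0 ≤ ((j : ℝ) - k) * (b j * w k - b k * w j)
    rw [hwb j, hwb k]
    have hA : 0 ≤ b j * b k := mul_nonneg (hbnn j) (hbnn k)
    have hkey0 : b j * (b k * q ^ k) - b k * (b j * q ^ j) = b j * b k * (q ^ k - q ^ j) := by
      ring
    rw [hkey0]
    rcases le_or_gt j k with hjk | hjk
    · have hc : (j : ℝ) ≤ k := by exact_mod_cast hjk
      have hp : q ^ k ≤ q ^ j := pow_le_pow_of_le_one hq0.le hq1 hjk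
      have e1 : ((j : ℝ) - k) ≤ 0 := by linarith
      have e2 : b j * b k * (q ^ k - q ^ j) ≤ 0 :=
        mul_nonpos_of_nonneg_of_nonpos hA (by linarith)
      nlinarith [mul_nonneg (neg_nonneg.mpr e1) (neg_nonneg.mpr e2)]
    · have hc : (k : ℝ) ≤ j := by exact_mod_cast hjk.le
      have hp : q ^ j ≤ q ^ k := pow_le_pow_of_le_one hq0.le hq1 hjk.le
      exact mul_nonneg (by linarith) (mul_nonneg hA (by linarith))
  have hkey : ∀ z : ℕ × ℕ, z.2 < z.1 → q ^ z.1 ≤ q * q ^ z.2 := by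
    rintro ⟨j, k⟩ hjk
    have : q ^ j ≤ q ^ (k + 1) := pow_le_pow_of_le_one hq0.le hq1 hjk
    calc q ^ j ≤ q ^ (k + 1) := this
    _ = q * q ^ k := by ring
  have hG1 : ∀ z, (1 - q) * h1 z ≤ G z := by
    rintro ⟨j, k⟩
    show (1 - q) * (if k < j then b j * w k else 0) ≤ ((j : ℝ) - k) * (b j * w k - b k * w j)
    by_cases hjk : k < j
    · rw [if_pos hjk, hwb j, hwb k]
      have hd : (1 : ℝ) ≤ (j : ℝ) - k := by
        have : (k : ℝ) + 1 ≤ j := by exact_mod_cast hjk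
        linarith
      have hp := hkey (j, k) hjk
      have hA : 0 ≤ b j * b k := mul_nonneg (hbnn j) (hbnn k)
      have hX : 0 ≤ q ^ k := pow_nonneg hq0.le k
      have c1 : (1 - q) * q ^ k ≤ q ^ k - q ^ j := by nlinarith
      have c2 : b j * b k * ((1 - q) * q ^ k) ≤ b j * b k * (q ^ k - q ^ j) :=
        mul_le_mul_of_nonneg_left c1 hA
      have c3 : b j * b k * (q ^ k - q ^ j) ≤ ((j : ℝ) - k) * (b j * b k * (q ^ k - q ^ j)) :=
        le_mul_of_one_le_left (mul_nonneg hA (by nlinarith)) hd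
      nlinarith [c2, c3]
    · rw [if_neg hjk, mul_zero]
      exact hGnn (j, k)
  have hG2 : ∀ z, h2 z ≤ G z := by
    rintro ⟨j, k⟩
    show (if k < j then b k * w j else 0) ≤ ((j : ℝ) - k) * (b j * w k - b k * w j)
    by_cases hjk : k < j
    · rw [if_pos hjk, hwb j, hwb k]
      have hd : (1 : ℝ) ≤ (j : ℝ) - k := by
        have : (k : ℝ) + 1 ≤ j := by exact_mod_cast hjk
        linarith
      have hp := hkey (j, k) hjk
      have hA : 0 ≤ b j * b k := mul_nonneg (hbnn j) (hbnn k)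
      have hX : 0 ≤ q ^ k := pow_nonneg hq0.le k
      -- q^j ≤ q*q^k ≤ q^k/2, so q^k - q^j ≥ q^k/2 ≥ q*q^k ≥ q^j
      have h5 : q ^ j ≤ q ^ k / 2 := le_trans hp (by nlinarith)
      have h6 : q ^ j ≤ q ^ k - q ^ j := by linarith
      have c2 : b j * b k * (q ^ j) ≤ b j * b k * (q ^ k - q ^ j) :=
        mul_le_mul_of_nonneg_left h6 hA
      have c3 : b j * b k * (q ^ k - q ^ j) ≤ ((j : ℝ) - k) * (b j * b k * (q ^ k - q ^ j)) :=
        le_mul_of_one_le_left (mul_nonneg hA (by linarith)) hd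
      nlinarith [c2, c3]
    · rw [if_neg hjk]
      exact hGnn (j, k)
  -- summability of the pieces
  have hh1nn : ∀ z, 0 ≤ h1 z := by
    rintro ⟨j, k⟩; show 0 ≤ if k < j then b j * w k else 0
    split <;> [exact mul_nonneg (hbnn _) (hwnn _); rfl]
  have hh2nn : ∀ z, 0 ≤ h2 z := by
    rintro ⟨j, k⟩; show 0 ≤ if k < j then b k * w j else 0
    split <;> [exact mul_nonneg (hbnn _) (hwnn _); rfl]
  have hh2'nn : ∀ z, 0 ≤ h2' z := by
    rintro ⟨j, k⟩; show 0 ≤ if j < k then b j * w k else 0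
    split <;> [exact mul_nonneg (hbnn _) (hwnn _); rfl]
  have hdgnn : ∀ z, 0 ≤ dg z := by
    rintro ⟨j, k⟩; show 0 ≤ if j = k then b j * w k else 0
    split <;> [exact mul_nonneg (hbnn _) (hwnn _); rfl]
  have hh1sum : Summable h1 := by
    refine Summable.of_nonneg_of_le hh1nn (fun z => ?_) hgprod
    show (if z.2 < z.1 then b z.1 * w z.2 else 0) ≤ b z.1 * w z.2
    split <;> [exact le_rfl; exact mul_nonneg (hbnn _) (hwnn _)]
  have hh2sum : Summable h2 := by
    refine Summable.of_nonneg_of_le hh2nn (fun z => ?_) hgprod'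
    show (if z.2 < z.1 then b z.2 * w z.1 else 0) ≤ b z.2 * w z.1
    split <;> [exact le_rfl; exact mul_nonneg (hbnn _) (hwnn _)]
  have hh2'sum : Summable h2' := by
    refine Summable.of_nonneg_of_le hh2'nn (fun z => ?_) hgprod
    show (if z.1 < z.2 then b z.1 * w z.2 else 0) ≤ b z.1 * w z.2
    split <;> [exact le_rfl; exact mul_nonneg (hbnn _) (hwnn _)]
  have hdgsum : Summable dg := by
    refine Summable.of_nonneg_of_le hdgnn (fun z => ?_) hgprod
    show (if z.1 = z.2 then b z.1 * w z.2 else 0) ≤ b z.1 * w z.2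
    split <;> [exact le_rfl; exact mul_nonneg (hbnn _) (hwnn _)]
  -- h2' and h2 have the same sum (swap)
  have hh2'eq : ∑' z, h2' z = ∑' z, h2 z := by
    have := Equiv.tsum_eq (Equiv.prodComm ℕ ℕ) h2'
    rw [← this]
    refine tsum_congr fun z => ?_
    show (if z.2 < z.1 then b z.2 * w z.1 else 0) = if z.2 < z.1 then b z.2 * w z.1 else 0
    rfl
  -- splitting the full product sum
  have hsplit : ∀ z : ℕ × ℕ, b z.1 * w z.2 = h1 z + h2' z + dg z := by
    rintro ⟨j, k⟩
    show b j * w k = (if k < j then b j * w k else 0) + (if j < k then b j * w k else 0)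
      + (if j = k then b j * w k else 0)
    rcases lt_trichotomy j k with h | h | h
    · rw [if_neg (by omega), if_pos h, if_neg (by omega)]; ring
    · rw [if_neg (by omega), if_neg (by omega), if_pos h]; ring
    · rw [if_pos h, if_neg (by omega), if_neg (by omega)]; ring
  have hfull : S0 * T0 = ∑' z, h1 z + ∑' z, h2' z + ∑' z, dg z := by
    rw [Summable.tsum_mul_tsum hS0 hT0 hgprod]
    rw [tsum_congr hsplit, Summable.tsum_add (hh1sum.add hh2'sum) hdgsum, Summable.tsum_add hh1sum hh2'sum]
  -- diagonal sum
  have hbwsum : Summable (fun k => b k * w k) := by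
    refine Summable.of_nonneg_of_le (fun k => mul_nonneg (hbnn k) (hwnn k)) (fun k => ?_)
      (hT0.mul_left ((1 - 6 * ε) * S0))
    exact mul_le_mul_of_nonneg_right (hbk k) (hwnn k)
  have hdgval : ∑' z, dg z = ∑' k, b k * w k := by
    have hinj : Function.Injective (fun k : ℕ => ((k, k) : ℕ × ℕ)) := by
      intro x y h; simpa using congrArg Prod.fst h
    have hsupp : Function.support dg ⊆ Set.range (fun k : ℕ => ((k, k) : ℕ × ℕ)) := by
      rintro ⟨j, k⟩ hz
      have : j = k := by
        by_contra hne
        apply hz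
        show (if j = k then b j * w k else 0) = 0
        rw [if_neg hne]
      exact ⟨j, by simp [this]⟩
    have := hinj.tsum_eq (f := dg) hsupp
    rw [← this]
    refine tsum_congr fun k => ?_
    show (if k = k then b k * w k else 0) = b k * w k
    rw [if_pos rfl]
  have hdiag_le : ∑' z, dg z ≤ (1 - 6 * ε) * S0 * T0 := by
    rw [hdgval]
    calc ∑' k, b k * w k ≤ ∑' k, ((1 - 6 * ε) * S0) * w k :=
        Summable.tsum_le_tsum (fun k => mul_le_mul_of_nonneg_right (hbk k) (hwnn k)) hbwsum
          (hT0.mul_left _)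
    _ = (1 - 6 * ε) * S0 * T0 := by rw [tsum_mul_left]
  -- sum-level bounds
  set X : ℝ := ∑' z, G z with hX_def
  have hXnn : 0 ≤ X := tsum_nonneg hGnn
  have hkey1 : (1 - q) * (∑' z, h1 z) ≤ X := by
    rw [← tsum_mul_left]
    exact Summable.tsum_le_tsum hG1 (hh1sum.mul_left _) hGsum
  have hkey2 : (∑' z, h2 z) ≤ X := Summable.tsum_le_tsum hG2 hh2sum hGsum
  have hh1tnn : 0 ≤ ∑' z, h1 z := tsum_nonneg hh1nn
  have hh2tnn : 0 ≤ ∑' z, h2 z := tsum_nonneg hh2nn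
  -- assemble: 6ε S0 T0 ≤ Σh1 + Σh2 ≤ 3X
  have hstep1 : 6 * ε * (S0 * T0) ≤ (∑' z, h1 z) + (∑' z, h2 z) := by
    have := hfull
    rw [hh2'eq] at this
    nlinarith [hdiag_le]
  have hstep2 : (∑' z, h1 z) ≤ 2 * X := by
    nlinarith [mul_nonneg (by linarith : (0:ℝ) ≤ 1/2 - q) hh1tnn]
  have hfin : ε * (S0 * T0) ≤ S1 * T0 - S0 * T1 := by
    have hX2 : X = 2 * (S1 * T0 - S0 * T1) := hGval
    nlinarith
  -- conclude
  have hfr : freqS a r = S1 / S0 := by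
    unfold freqS
    congr 1
    exact tsum_congr fun k => by rw [hb_def]; ring
  have hfs : freqS a s = T1 / T0 := by
    unfold freqS
    congr 1
    exact tsum_congr fun k => by rw [hw_def]; ring
  rw [hfr, hfs, div_sub_div _ _ hS0pos.ne' hT0pos.ne', le_div_iff₀ (mul_pos hS0pos hT0pos)]
  nlinarith [hfin]
end
end
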